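/- (Main theorem: stationarity of the quantum graph walk characterizes quantum graph eigenfunctions) Let (L, λ, A) be quantum-graph parameters and k a nonzero real. Given a ∈ ℂ^{D(G)} with components a_{(i,j)}, define for each arc (i,j) the function Ψ_{(i,j)} : ℝ → ℂ by Ψ_{(i,j)}(x) = a_{(i,j)}·e^{−i(k+A_{(i,j)})x} + a_{(j,i)}·e^{−i(k+A_{(j,i)})(L_{{i,j}}−x)}. Then the following are equivalent: (1) the family (Ψ_{(i,j)}) satisfies the quantum graph boundary conditions, namely for every vertex i ∈ V there exists φ_i ∈ ℂ such that Ψ_{(i,j)}(0) = φ_i for all j ∈ N(i), and Σ_{j∈N(i)} (−i·Ψ_{(i,j)}'(0) + A_{(i,j)}·Ψ_{(i,j)}(0)) = −i·λ_i·φ_i; (2) a is a fixed point of the quantum graph walk: U^{(L,λ,A)}(k)·a = a. -/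

import Mathlib

open Matrix Complex BigOperators

section QWFramework

variable {V : Type*}

instance arcDecPred (G : SimpleGraph V) [DecidableRel G.Adj] :
    DecidablePred fun p : V × V => G.Adj p.1 p.2 :=
  fun p => inferInstanceAs (Decidable (G.Adj p.1 p.2))

instance nbrDecPred (G : SimpleGraph V) [DecidableRel G.Adj] (u : V) :
    DecidablePred (G.Adj u) :=
  fun w => inferInstanceAs (Decidable (G.Adj u w))

/-- The symmetric arc set `D(G)` of a graph: ordered pairs of adjacent vertices. -/
abbrev Arc (G : SimpleGraph V) : Type _ := {p : V × V // G.Adj p.1 p.2}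

variable [Fintype V] [DecidableEq V]

/-- The shift (permutation) operator `S_σ` of a shift family `σ`, acting on `ℂ^{D(G)}`
by `S_σ |i,j⟩ = |j, σ_j(i)⟩`. -/
noncomputable def shiftOp (G : SimpleGraph V) [DecidableRel G.Adj]
    (σ : ∀ u : V, Equiv.Perm {w : V // G.Adj u w}) :
    Matrix (Arc G) (Arc G) ℂ :=
  fun a b => if a.1.1 = b.1.2 ∧ a.1.2 = (σ b.1.2 ⟨b.1.1, b.2.symm⟩).1 then 1 else 0

/-- The flip-flop shift family: the identity permutation at every vertex. -/
def ffFam (G : SimpleGraph V) : ∀ u : V, Equiv.Perm {w : V // G.Adj u w} :=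
  fun _ => Equiv.refl _

/-- The flip-flop shift operator `S`, with `S|i,j⟩ = |j,i⟩`. -/
noncomputable def ffShift (G : SimpleGraph V) [DecidableRel G.Adj] : Matrix (Arc G) (Arc G) ℂ :=
  shiftOp G (ffFam G)

/-- The block-diagonal coin operator `C = ⊕_u H_u`, acting by
`C|i,j⟩ = Σ_{k∈N(i)} (H_i)_{k,j} |i,k⟩`. -/
noncomputable def coinOp (G : SimpleGraph V) [DecidableRel G.Adj]
    (H : ∀ u : V, Matrix {w : V // G.Adj u w} {w : V // G.Adj u w} ℂ) :
    Matrix (Arc G) (Arc G) ℂ :=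
  fun a b => if h : a.1.1 = b.1.1 then H b.1.1 ⟨a.1.2, by rw [← h]; exact a.2⟩ ⟨b.1.2, b.2⟩ else 0

/-- The G-type (Gudder type) coined quantum walk `U^G_σ[H] = C·S_σ`. -/
noncomputable def gWalk (G : SimpleGraph V) [DecidableRel G.Adj]
    (σ : ∀ u : V, Equiv.Perm {w : V // G.Adj u w})
    (H : ∀ u : V, Matrix {w : V // G.Adj u w} {w : V // G.Adj u w} ℂ) :
    Matrix (Arc G) (Arc G) ℂ :=
  coinOp G H * shiftOp G σ

/-- The A-type (Ambainis type) coined quantum walk `U^A_σ[H] = S_σ·C`. -/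
noncomputable def aWalk (G : SimpleGraph V) [DecidableRel G.Adj]
    (σ : ∀ u : V, Equiv.Perm {w : V // G.Adj u w})
    (H : ∀ u : V, Matrix {w : V // G.Adj u w} {w : V // G.Adj u w} ℂ) :
    Matrix (Arc G) (Arc G) ℂ :=
  shiftOp G σ * coinOp G H

end QWFramework

/-- The arc value of an edge potential: `A_{(i,j)} = sgn(j−i)·A_{{i,j}}`. -/
def arcPot {V : Type*} [LinearOrder V] (Ae : V → V → ℝ) (i j : V) : ℝ :=
  if i < j then Ae i j else -(Ae i j)

/-- The local coin `H_j(k)` of the quantum graph walk at vertex `j`: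
`(H_j(k))_{m,l} = (2/(d_j + iλ_j/k) − δ_{l,m})·e^{iL_{{j,m}}(k − A_{(j,m)})}`. -/
noncomputable def qgCoin {V : Type*} [Fintype V] [LinearOrder V]
    (G : SimpleGraph V) [DecidableRel G.Adj]
    (L : V → V → ℝ) (lam : V → ℝ) (Ae : V → V → ℝ) (k : ℝ) (j : V) :
    Matrix {w : V // G.Adj j w} {w : V // G.Adj j w} ℂ :=
  fun m l =>
    (2 / ((G.degree j : ℂ) + Complex.I * (lam j : ℂ) / (k : ℂ)) - if l = m then 1 else 0) *
      Complex.exp (Complex.I * (L j m.1 : ℂ) * ((k : ℂ) - (arcPot Ae j m.1 : ℂ)))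

/-- The quantum graph walk `U^{(L,λ,A)}(k) = S·C(k)`: the A-type walk with flip-flop shift
and coins `H_j(k)`. -/
noncomputable def qgWalk {V : Type*} [Fintype V] [LinearOrder V]
    (G : SimpleGraph V) [DecidableRel G.Adj]
    (L : V → V → ℝ) (lam : V → ℝ) (Ae : V → V → ℝ) (k : ℝ) :
    Matrix (Arc G) (Arc G) ℂ :=
  ffShift G * coinOp G (qgCoin G L lam Ae k)

/-- The eigenfunction on arc `(i,j)` built from amplitudes `a`:
`Ψ_{(i,j)}(x) = a_{(i,j)}·e^{−i(k+A_{(i,j)})x} + a_{(j,i)}·e^{−i(k+A_{(j,i)})(L_{{i,j}}−x)}`. -/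
noncomputable def qgPsi {V : Type*} [Fintype V] [LinearOrder V]
    (G : SimpleGraph V) [DecidableRel G.Adj]
    (L : V → V → ℝ) (Ae : V → V → ℝ) (k : ℝ) (a : Arc G → ℂ)
    (i j : V) (h : G.Adj i j) : ℝ → ℂ :=
  fun x =>
    a ⟨(i, j), h⟩ * Complex.exp (-Complex.I * ((k : ℂ) + (arcPot Ae i j : ℂ)) * (x : ℂ)) +
    a ⟨(j, i), h.symm⟩ *
      Complex.exp (-Complex.I * ((k : ℂ) + (arcPot Ae j i : ℂ)) * ((L i j - x : ℝ) : ℂ))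

/-!
The flux `-i Ψ'_{(i,j)}(0) + A_{(i,j)} Ψ_{(i,j)}(0)` of the plane-wave ansatz equals
`k Ψ_{(i,j)}(0) - 2k a_{(i,j)}`, so once the values `Ψ_{(i,j)}(0)` agree, the Kirchhoff condition
at `i` pins their common value to `w_i = 2/(d_i + iλ_i/k) · Σ_l a_{(i,l)}`. On the other hand
`Ψ_{(i,j)}(0) = a_{(i,j)} + e^{-iL(k - A_{(i,j)})} a_{(j,i)}`, so `Ψ_{(i,j)}(0) = w_i` says
`a_{(j,i)} = e^{iL(k - A_{(i,j)})} (w_i - a_{(i,j)})`, the `(j,i)`-component of `U a = a`.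
-/

section Operators

variable {V : Type*} [Fintype V] [DecidableEq V] (G : SimpleGraph V) [DecidableRel G.Adj]

theorem ffShift_mulVec_apply (v : Arc G → ℂ) {i j : V} (h : G.Adj i j) :
    (ffShift G *ᵥ v) ⟨(i, j), h⟩ = v ⟨(j, i), h.symm⟩ := by
  rw [mulVec, dotProduct, Finset.sum_eq_single_of_mem ⟨(j, i), h.symm⟩ (Finset.mem_univ _)]
  · simp [ffShift, shiftOp, ffFam]
  · rintro ⟨⟨p, q⟩, hpq⟩ - hne
    refine mul_eq_zero_of_left (if_neg ?_) _
    rintro ⟨rfl, rfl⟩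
    exact hne rfl

theorem coinOp_mulVec_apply (H : ∀ u : V, Matrix {w // G.Adj u w} {w // G.Adj u w} ℂ)
    (v : Arc G → ℂ) {i j : V} (h : G.Adj i j) :
    (coinOp G H *ᵥ v) ⟨(i, j), h⟩ = ∑ l : {w // G.Adj i w}, H i ⟨j, h⟩ l * v ⟨(i, l.1), l.2⟩ := by
  rw [mulVec, dotProduct, ← (Equiv.subtypeProdEquivSigmaSubtype G.Adj).symm.sum_comp,
    Fintype.sum_sigma, Finset.sum_eq_single_of_mem i (Finset.mem_univ _)]
  · simp [coinOp, Equiv.subtypeProdEquivSigmaSubtype]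
  · intro u _ hne
    exact Finset.sum_eq_zero fun l _ => mul_eq_zero_of_left (dif_neg (Ne.symm hne)) _

end Operators

theorem arcPot_swap {V : Type*} [LinearOrder V] {Ae : V → V → ℝ} (hAs : ∀ i j, Ae i j = Ae j i)
    {i j : V} (hij : i ≠ j) : arcPot Ae j i = -arcPot Ae i j := by
  rcases hij.lt_or_gt with h | h <;> simp [arcPot, h, h.not_gt, hAs j i]

noncomputable def qgPhase {V : Type*} [LinearOrder V] (L Ae : V → V → ℝ) (k : ℝ) (i j : V) : ℂ :=
  exp (I * L i j * (k - arcPot Ae i j))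

section Psi

variable {V : Type*} [Fintype V] [LinearOrder V] {G : SimpleGraph V} [DecidableRel G.Adj]
  (L : V → V → ℝ) {Ae : V → V → ℝ} (k : ℝ) (a : Arc G → ℂ) {i j : V} (h : G.Adj i j)

theorem qgPsi_zero (hAs : ∀ i j, Ae i j = Ae j i) :
    qgPsi G L Ae k a i j h 0 = a ⟨(i, j), h⟩ + (qgPhase L Ae k i j)⁻¹ * a ⟨(j, i), h.symm⟩ := by
  simp only [qgPsi, qgPhase, arcPot_swap hAs h.ne, ← exp_neg, ofReal_zero, mul_zero, exp_zero,
    sub_zero, mul_comm (a _)]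
  congr 3 <;> push_cast <;> ring

theorem hasDerivAt_qgPsi_zero :
    HasDerivAt (qgPsi G L Ae k a i j h)
      (-I * (k + arcPot Ae i j) * a ⟨(i, j), h⟩ +
        I * (k + arcPot Ae j i) * a ⟨(j, i), h.symm⟩ * exp (-I * (k + arcPot Ae j i) * L i j))
      0 := by
  have hin : HasDerivAt (fun x : ℝ => -I * (k + arcPot Ae i j) * (x : ℂ))
      (-I * (k + arcPot Ae i j)) 0 := by
    simpa using (hasDerivAt_id (0 : ℝ)).ofReal_comp.const_mul (-I * (k + arcPot Ae i j))
  have hout : HasDerivAt (fun x : ℝ => -I * (k + arcPot Ae j i) * ((L i j - x : ℝ) : ℂ))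
      (I * (k + arcPot Ae j i)) 0 := by
    simpa using ((hasDerivAt_id (0 : ℝ)).const_sub (L i j)).ofReal_comp.const_mul
      (-I * (k + arcPot Ae j i))
  refine ((hin.cexp.const_mul (a ⟨(i, j), h⟩)).add
    (hout.cexp.const_mul (a ⟨(j, i), h.symm⟩))).congr_deriv ?_
  simp only [ofReal_zero, mul_zero, exp_zero, sub_zero]
  ring

theorem qgPsi_flux (hAs : ∀ i j, Ae i j = Ae j i) :
    -I * deriv (qgPsi G L Ae k a i j h) 0 + arcPot Ae i j * qgPsi G L Ae k a i j h 0 =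
      k * qgPsi G L Ae k a i j h 0 - 2 * k * a ⟨(i, j), h⟩ := by
  rw [(hasDerivAt_qgPsi_zero L k a h).deriv]
  simp only [qgPsi, arcPot_swap hAs h.ne, ofReal_neg, ofReal_zero, mul_zero, exp_zero, sub_zero]
  linear_combination ((k + arcPot Ae i j) * a ⟨(i, j), h⟩ - (k - arcPot Ae i j) *
    a ⟨(j, i), h.symm⟩ * exp (-I * (k - arcPot Ae i j) * L i j)) * I_mul_I

end Psi

theorem exists_const_and_sum_eq_iff {ι : Type*} [Fintype ι] (ψ b : ι → ℂ) (lam : ℝ) {k : ℝ}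
    (hk : k ≠ 0) :
    (∃ φ, (∀ m, ψ m = φ) ∧ ∑ m, (k * ψ m - 2 * k * b m) = -I * lam * φ) ↔
      ∀ m, ψ m = 2 / (Fintype.card ι + I * lam / k) * ∑ m, b m := by
  rcases isEmpty_or_nonempty ι with hι | hι
  · exact iff_of_true ⟨0, isEmptyElim, by simp⟩ isEmptyElim
  -- its real part is `card ι > 0`
  have hD : (Fintype.card ι : ℂ) + I * lam / k ≠ 0 := fun h0 => by
    have hre := congrArg re h0
    simp at hre
  have hDk : ((Fintype.card ι : ℂ) + I * lam / k) * k = Fintype.card ι * k + I * lam := by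
    rw [add_mul, div_mul_cancel₀ _ (ofReal_ne_zero.mpr hk)]
  constructor
  · rintro ⟨φ, hψ, hsum⟩ m
    simp only [hψ, Finset.sum_sub_distrib, Finset.sum_const, Finset.card_univ, nsmul_eq_mul,
      ← Finset.mul_sum] at hsum
    rw [hψ m, div_mul_eq_mul_div, eq_div_iff hD]
    refine mul_right_cancel₀ (ofReal_ne_zero.mpr hk) ?_
    linear_combination hsum + φ * hDk
  · intro hψ
    refine ⟨_, hψ, ?_⟩
    simp only [hψ, Finset.sum_sub_distrib, Finset.sum_const, Finset.card_univ, nsmul_eq_mul,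
      ← Finset.mul_sum]
    linear_combination (k * ∑ m, b m) * div_mul_cancel₀ (2 : ℂ) hD -
      (2 / (Fintype.card ι + I * lam / k) * ∑ m, b m) * hDk

theorem SimpleGraph.card_adj_subtype {V : Type*} [Fintype V] (G : SimpleGraph V)
    [DecidableRel G.Adj] (i : V) : Fintype.card {w // G.Adj i w} = G.degree i := by
  rw [← G.card_neighborSet_eq_degree]
  rfl

section Walk

variable {V : Type*} [Fintype V] [LinearOrder V] {G : SimpleGraph V} [DecidableRel G.Adj]
  (L : V → V → ℝ) (lam : V → ℝ) {Ae : V → V → ℝ} {k : ℝ} (a : Arc G → ℂ)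

theorem qgPsi_boundary_condition_iff (hAs : ∀ i j, Ae i j = Ae j i) (hk : k ≠ 0) (i : V) :
    (∃ φ : ℂ, (∀ m : {w // G.Adj i w}, qgPsi G L Ae k a i m.1 m.2 0 = φ) ∧
      ∑ m : {w // G.Adj i w}, (-I * deriv (qgPsi G L Ae k a i m.1 m.2) 0 +
        arcPot Ae i m.1 * qgPsi G L Ae k a i m.1 m.2 0) = -I * lam i * φ) ↔
    ∀ m : {w // G.Adj i w}, qgPsi G L Ae k a i m.1 m.2 0 =
      2 / (G.degree i + I * lam i / k) * ∑ l : {w // G.Adj i w}, a ⟨(i, l.1), l.2⟩ := by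
  simp only [qgPsi_flux L k a _ hAs]
  rw [exists_const_and_sum_eq_iff _ _ _ hk, G.card_adj_subtype]

theorem qgWalk_mulVec_apply {i m : V} (h : G.Adj i m) :
    (qgWalk G L lam Ae k *ᵥ a) ⟨(m, i), h.symm⟩ = qgPhase L Ae k i m *
      (2 / (G.degree i + I * lam i / k) * ∑ l : {w // G.Adj i w}, a ⟨(i, l.1), l.2⟩ -
        a ⟨(i, m), h⟩) := by
  rw [qgWalk, ← mulVec_mulVec, ffShift_mulVec_apply, coinOp_mulVec_apply]
  simp only [qgCoin, qgPhase, sub_mul, Finset.sum_sub_distrib, ite_mul, one_mul, zero_mul,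
    Finset.sum_ite_eq', Finset.mem_univ, if_true, mul_assoc, ← Finset.mul_sum]
  ring

theorem qgPsi_zero_eq_iff_qgWalk_mulVec_apply (hAs : ∀ i j, Ae i j = Ae j i) {i m : V}
    (h : G.Adj i m) :
    qgPsi G L Ae k a i m h 0 =
        2 / (G.degree i + I * lam i / k) * ∑ l : {w // G.Adj i w}, a ⟨(i, l.1), l.2⟩ ↔
      (qgWalk G L lam Ae k *ᵥ a) ⟨(m, i), h.symm⟩ = a ⟨(m, i), h.symm⟩ := by
  have hphase : qgPhase L Ae k i m ≠ 0 := exp_ne_zero _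
  rw [qgPsi_zero L k a h hAs, qgWalk_mulVec_apply L lam a h, ← eq_inv_mul_iff_mul_eq₀ hphase,
    sub_eq_iff_eq_add', eq_comm]

end Walk

theorem arc_funext_iff {V β : Type*} {G : SimpleGraph V} {f g : Arc G → β} :
    f = g ↔ ∀ i (m : {w // G.Adj i w}), f ⟨(m.1, i), m.2.symm⟩ = g ⟨(m.1, i), m.2.symm⟩ :=
  ⟨fun h _ _ => h ▸ rfl, fun h => funext fun ⟨⟨m, i⟩, hmi⟩ => h i ⟨m, hmi.symm⟩⟩

theorem qgWalk_fixed_point_iff_boundary_conditions_general {V : Type*} [Fintype V] [LinearOrder V]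
    (G : SimpleGraph V) [DecidableRel G.Adj]
    (L : V → V → ℝ)
    (lam : V → ℝ)
    (Ae : V → V → ℝ) (hAs : ∀ i j, Ae i j = Ae j i)
    (k : ℝ) (hk : k ≠ 0)
    (a : Arc G → ℂ) :
    (∀ i : V, ∃ φ : ℂ,
        (∀ m : {w : V // G.Adj i w}, qgPsi G L Ae k a i m.1 m.2 0 = φ) ∧
        (∑ m : {w : V // G.Adj i w},
            (-Complex.I * deriv (qgPsi G L Ae k a i m.1 m.2) 0 +
              (arcPot Ae i m.1 : ℂ) * qgPsi G L Ae k a i m.1 m.2 0)) =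
          -Complex.I * (lam i : ℂ) * φ) ↔
      (qgWalk G L lam Ae k).mulVec a = a := by
  simp only [qgPsi_boundary_condition_iff L lam a hAs hk,
    qgPsi_zero_eq_iff_qgWalk_mulVec_apply L lam a hAs]
  exact arc_funext_iff.symm

/-- main theorem: stationarity of the quantum graph walk characterizes quantum
graph eigenfunctions: the family `(Ψ_{(i,j)})` built from `a ∈ ℂ^{D(G)}` satisfies the quantum
graph boundary conditions at every vertex if and only if `U^{(L,λ,A)}(k)·a = a`. -/
theorem qgWalk_fixed_point_iff_boundary_conditions {V : Type*} [Fintype V] [LinearOrder V]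
    (G : SimpleGraph V) [DecidableRel G.Adj] (hG : G.Connected)
    (L : V → V → ℝ) (hLs : ∀ i j, L i j = L j i) (hLpos : ∀ i j, G.Adj i j → 0 < L i j)
    (lam : V → ℝ) (hlam : ∀ i, 0 ≤ lam i)
    (Ae : V → V → ℝ) (hAs : ∀ i j, Ae i j = Ae j i)
    (k : ℝ) (hk : k ≠ 0)
    (a : Arc G → ℂ) :
    (∀ i : V, ∃ φ : ℂ,
        (∀ m : {w : V // G.Adj i w}, qgPsi G L Ae k a i m.1 m.2 0 = φ) ∧
        (∑ m : {w : V // G.Adj i w},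
            (-Complex.I * deriv (qgPsi G L Ae k a i m.1 m.2) 0 +
              (arcPot Ae i m.1 : ℂ) * qgPsi G L Ae k a i m.1 m.2 0)) =
          -Complex.I * (lam i : ℂ) * φ) ↔
      (qgWalk G L lam Ae k).mulVec a = a :=
  qgWalk_fixed_point_iff_boundary_conditions_general G L lam Ae hAs k hk a
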